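/- For the embedding ι₃: SL(2,ℝ) → Sp(2,ℝ), ι₃(M) = (M 0; 0 (Mᵀ)⁻¹), one has w(ι₃(M), ι₃(N)) = 0 for all M, N ∈ SL(2,ℝ). Consequently, for any multiplier system v of weight r on a group containing the image of ι₃, the map M ↦ v(ι₃(M)) is a group homomorphism. -/

import Mathlib

open Matrix Complex

noncomputable section

/-- The space of `2g × 2g` real matrices (symplectic candidates). -/
abbrev SpMat (g : ℕ) := Matrix (Fin g ⊕ Fin g) (Fin g ⊕ Fin g) ℝ

/-- The Siegel upper half plane of genus `g`: symmetric complex matrices with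
positive definite imaginary part. -/
def SiegelUHP (g : ℕ) : Set (Matrix (Fin g) (Fin g) ℂ) :=
  {Z | Z.IsSymm ∧ Matrix.PosDef (Matrix.of fun i j => (Z i j).im)}

/-- Coercion of a real matrix to a complex matrix. -/
def cmat {g : ℕ} (A : Matrix (Fin g) (Fin g) ℝ) : Matrix (Fin g) (Fin g) ℂ :=
  A.map (fun x => (x : ℂ))

/-- The automorphy factor `J(M,Z) = det (C Z + D)`. -/
def Jfac {g : ℕ} (M : SpMat g) (Z : Matrix (Fin g) (Fin g) ℂ) : ℂ :=
  (cmat M.toBlocks₂₁ * Z + cmat M.toBlocks₂₂).det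

/-- The action `M⟨Z⟩ = (A Z + B)(C Z + D)⁻¹` on the Siegel upper half plane. -/
def spAct {g : ℕ} (M : SpMat g) (Z : Matrix (Fin g) (Fin g) ℂ) :
    Matrix (Fin g) (Fin g) ℂ :=
  (cmat M.toBlocks₁₁ * Z + cmat M.toBlocks₁₂) *
    (cmat M.toBlocks₂₁ * Z + cmat M.toBlocks₂₂)⁻¹

/-- The base point `i·E` of the Siegel upper half plane. -/
def iE (g : ℕ) : Matrix (Fin g) (Fin g) ℂ := Complex.I • 1

/-- `L` is a continuous branch of `arg J(M, ·)` on the Siegel upper half plane,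
normalized to the principal value at `Z = iE`. -/
def IsArgBranch (g : ℕ) (L : SpMat g → Matrix (Fin g) (Fin g) ℂ → ℝ) : Prop :=
  (∀ M ∈ Matrix.symplecticGroup (Fin g) ℝ, ContinuousOn (L M) (SiegelUHP g)) ∧
  (∀ M ∈ Matrix.symplecticGroup (Fin g) ℝ, ∀ Z ∈ SiegelUHP g,
      (‖Jfac M Z‖ : ℂ) * Complex.exp (Complex.I * (L M Z)) = Jfac M Z) ∧
  (∀ M ∈ Matrix.symplecticGroup (Fin g) ℝ, L M (iE g) = Complex.arg (Jfac M (iE g)))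

/-- The cocycle `w(M,N) = (1/2π)(L(MN,Z) - L(M,NZ) - L(N,Z))`, evaluated at the
base point `Z = iE` (it is independent of `Z`). -/
def wcoc {g : ℕ} (L : SpMat g → Matrix (Fin g) (Fin g) ℂ → ℝ) (M N : SpMat g) : ℝ :=
  (L (M * N) (iE g) - L M (spAct N (iE g)) - L N (iE g)) / (2 * Real.pi)

/-- A multiplier system of weight `r` on `Γ`: values of absolute value `1`
satisfying `v(MN) = v(M)v(N)·e^{2πi r w(M,N)}`. -/
def IsMultiplier (g : ℕ) (L : SpMat g → Matrix (Fin g) (Fin g) ℂ → ℝ)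
    (Γ : Set (SpMat g)) (r : ℝ) (v : SpMat g → ℂ) : Prop :=
  (∀ M ∈ Γ, ‖v M‖ = 1) ∧
  (∀ M ∈ Γ, ∀ N ∈ Γ, v (M * N) =
      v M * v N * Complex.exp (2 * Real.pi * Complex.I * r * wcoc L M N))

/-- The embedding `ι₃ : SL(2,ℝ) → Sp(2,ℝ)`, `M ↦ (M 0; 0 (Mᵀ)⁻¹)`. -/
def iota3' (A : Matrix (Fin 2) (Fin 2) ℝ) : SpMat 2 :=
  Matrix.fromBlocks A 0 0 (Aᵀ)⁻¹

/-!
`ι₃(M)` has lower-left block `0` and lower-right block `(Mᵀ)⁻¹` of determinant `1`, so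
`J(ι₃(M), Z) = 1` for every `Z`. A continuous branch of `arg J(ι₃(M), ·)` therefore takes values
in `2πℤ` on the convex, hence connected, Siegel upper half plane, and it vanishes at `iE`; so it
vanishes identically. Each of the three terms of `w(ι₃(M), ι₃(N))` is a value of such a branch,
since `ι₃(M) ι₃(N) = ι₃(MN)` and `ι₃(N)⟨iE⟩ = i N Nᵀ` lies in the Siegel upper half plane.
-/

lemma cmat_mul {g : ℕ} (A B : Matrix (Fin g) (Fin g) ℝ) : cmat (A * B) = cmat A * cmat B :=
  Matrix.map_mul (f := Complex.ofRealHom)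

lemma cmat_one {g : ℕ} : cmat (1 : Matrix (Fin g) (Fin g) ℝ) = 1 :=
  Matrix.map_one _ Complex.ofReal_zero Complex.ofReal_one

lemma cmat_zero {g : ℕ} : cmat (0 : Matrix (Fin g) (Fin g) ℝ) = 0 :=
  Matrix.map_zero _ Complex.ofReal_zero

lemma cmat_transpose {g : ℕ} (A : Matrix (Fin g) (Fin g) ℝ) : cmat Aᵀ = (cmat A)ᵀ :=
  Matrix.transpose_map

lemma det_cmat {g : ℕ} (A : Matrix (Fin g) (Fin g) ℝ) : (cmat A).det = A.det :=
  (Complex.ofRealHom.map_det A).symm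

lemma cmat_inv {g : ℕ} (A : Matrix (Fin g) (Fin g) ℝ) : cmat A⁻¹ = (cmat A)⁻¹ := by
  by_cases hA : IsUnit A.det
  · refine (Matrix.inv_eq_left_inv ?_).symm
    rw [← cmat_mul, Matrix.nonsing_inv_mul _ hA, cmat_one]
  · have hA' : ¬ IsUnit (cmat A).det := by simpa [det_cmat] using hA
    rw [Matrix.nonsing_inv_apply_not_isUnit _ hA, Matrix.nonsing_inv_apply_not_isUnit _ hA',
      cmat_zero]

lemma im_smul_add_smul {g : ℕ} (a b : ℝ) (X Y : Matrix (Fin g) (Fin g) ℂ) :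
    (Matrix.of fun i j => ((a • X + b • Y) i j).im) =
      a • Matrix.of (fun i j => (X i j).im) + b • Matrix.of (fun i j => (Y i j).im) := by
  ext i j; simp

theorem convex_siegelUHP (g : ℕ) : Convex ℝ (SiegelUHP g) := by
  intro X hX Y hY a b ha hb hab
  rcases ha.eq_or_lt with rfl | ha
  · simpa [show b = 1 by linarith] using hY
  refine ⟨?_, ?_⟩
  · rw [Matrix.IsSymm, Matrix.transpose_add, Matrix.transpose_smul, Matrix.transpose_smul,
      hX.1.eq, hY.1.eq]
  · rw [im_smul_add_smul]
    exact (hX.2.smul ha).add_posSemidef (hY.2.posSemidef.smul hb)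

lemma I_smul_cmat_mem_siegelUHP {g : ℕ} {S : Matrix (Fin g) (Fin g) ℝ} (hS : S.PosDef) :
    Complex.I • cmat S ∈ SiegelUHP g := by
  refine ⟨?_, ?_⟩
  · rw [Matrix.IsSymm, Matrix.transpose_smul, ← cmat_transpose,
      ← Matrix.conjTranspose_eq_transpose_of_trivial, hS.isHermitian.eq]
  · convert hS
    ext i j
    simp [cmat]

lemma iE_mem_siegelUHP (g : ℕ) : iE g ∈ SiegelUHP g := by
  simpa [iE, cmat_one] using I_smul_cmat_mem_siegelUHP (Matrix.PosDef.one (n := Fin g) (R := ℝ))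

lemma Jfac_fromBlocks_zero {g : ℕ} (A B D : Matrix (Fin g) (Fin g) ℝ)
    (Z : Matrix (Fin g) (Fin g) ℂ) : Jfac (Matrix.fromBlocks A B 0 D) Z = D.det := by
  simp [Jfac, cmat_zero, det_cmat]

lemma spAct_fromBlocks_diagonal {g : ℕ} (A D : Matrix (Fin g) (Fin g) ℝ)
    (Z : Matrix (Fin g) (Fin g) ℂ) :
    spAct (Matrix.fromBlocks A 0 0 D) Z = cmat A * Z * (cmat D)⁻¹ := by
  simp [spAct, cmat_zero]

lemma IsPreconnected.eqOn_zero_of_exp_mul_I_eq_one {X : Type*} [TopologicalSpace X] {S : Set X}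
    (hS : IsPreconnected S) {f : X → ℝ} (hf : ContinuousOn f S)
    (hexp : ∀ x ∈ S, Complex.exp (Complex.I * f x) = 1) {x₀ : X} (hx₀ : x₀ ∈ S) (h0 : f x₀ = 0) :
    Set.EqOn f 0 S := by
  have hmaps : Set.MapsTo f S (AddSubgroup.zmultiples (2 * Real.pi)) := by
    intro x hx
    obtain ⟨n, hn⟩ := Circle.exp_eq_one.mp (Circle.ext (by simpa [mul_comm] using hexp x hx))
    exact ⟨n, by simp [hn]⟩
  intro x hx
  rw [Pi.zero_apply, ← h0]
  exact hS.constant_of_mapsTo (SetLike.isDiscrete_iff_discreteTopology.mpr inferInstance) hf hmaps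
    hx hx₀

lemma IsArgBranch.eq_zero_of_Jfac_eq_one {g : ℕ} {L : SpMat g → Matrix (Fin g) (Fin g) ℂ → ℝ}
    (hL : IsArgBranch g L) {M : SpMat g} (hM : M ∈ Matrix.symplecticGroup (Fin g) ℝ)
    (hJ : ∀ Z ∈ SiegelUHP g, Jfac M Z = 1) {Z : Matrix (Fin g) (Fin g) ℂ}
    (hZ : Z ∈ SiegelUHP g) : L M Z = 0 := by
  refine (convex_siegelUHP g).isPreconnected.eqOn_zero_of_exp_mul_I_eq_one (hL.1 M hM)
    (fun W hW => ?_) (iE_mem_siegelUHP g) ?_ hZ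
  · simpa [hJ W hW] using hL.2.1 M hM W hW
  · rw [hL.2.2 M hM, hJ _ (iE_mem_siegelUHP g), Complex.arg_one]

lemma IsMultiplier.map_mul_of_wcoc_eq_zero {g : ℕ} {L : SpMat g → Matrix (Fin g) (Fin g) ℂ → ℝ}
    {Γ : Set (SpMat g)} {r : ℝ} {v : SpMat g → ℂ} (hv : IsMultiplier g L Γ r v)
    {M N : SpMat g} (hM : M ∈ Γ) (hN : N ∈ Γ) (hw : wcoc L M N = 0) :
    v (M * N) = v M * v N := by
  simpa [hw] using hv.2 M hM N hN

lemma iota3'_mul (M N : Matrix (Fin 2) (Fin 2) ℝ) : iota3' M * iota3' N = iota3' (M * N) := by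
  simp [iota3', Matrix.fromBlocks_multiply, Matrix.transpose_mul, Matrix.mul_inv_rev]

lemma iota3'_mem_symplecticGroup {M : Matrix (Fin 2) (Fin 2) ℝ} (hM : IsUnit M.det) :
    iota3' M ∈ Matrix.symplecticGroup (Fin 2) ℝ := by
  rw [SymplecticGroup.mem_iff, iota3', Matrix.J, Matrix.fromBlocks_transpose,
    Matrix.fromBlocks_multiply, Matrix.fromBlocks_multiply]
  have hMt : IsUnit Mᵀ.det := by rwa [Matrix.det_transpose]
  simp [Matrix.transpose_nonsing_inv, Matrix.mul_nonsing_inv _ hM, Matrix.nonsing_inv_mul _ hMt]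

lemma Jfac_iota3' {M : Matrix (Fin 2) (Fin 2) ℝ} (hM : M.det = 1) (Z : Matrix (Fin 2) (Fin 2) ℂ) :
    Jfac (iota3' M) Z = 1 := by
  simp [iota3', Jfac_fromBlocks_zero, Matrix.det_nonsing_inv, hM]

lemma spAct_iota3'_iE {N : Matrix (Fin 2) (Fin 2) ℝ} (hN : IsUnit N.det) :
    spAct (iota3' N) (iE 2) = Complex.I • cmat (N * Nᵀ) := by
  have hNt : IsUnit Nᵀ.det := by rwa [Matrix.det_transpose]
  rw [iota3', spAct_fromBlocks_diagonal, ← cmat_inv, Matrix.nonsing_inv_nonsing_inv _ hNt, iE,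
    Matrix.mul_smul, mul_one, Matrix.smul_mul, cmat_mul]

lemma spAct_iota3'_iE_mem_siegelUHP {N : Matrix (Fin 2) (Fin 2) ℝ} (hN : IsUnit N.det) :
    spAct (iota3' N) (iE 2) ∈ SiegelUHP 2 := by
  rw [spAct_iota3'_iE hN]
  exact I_smul_cmat_mem_siegelUHP
    (Matrix.PosDef.mul_conjTranspose_self N (Matrix.vecMul_injective_iff_isUnit.mpr
      ((Matrix.isUnit_iff_isUnit_det _).mpr hN)))

theorem wcoc_iota3' {L : SpMat 2 → Matrix (Fin 2) (Fin 2) ℂ → ℝ} (hL : IsArgBranch 2 L)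
    {M N : Matrix (Fin 2) (Fin 2) ℝ} (hM : M.det = 1) (hN : N.det = 1) :
    wcoc L (iota3' M) (iota3' N) = 0 := by
  have hMN : (M * N).det = 1 := by rw [Matrix.det_mul, hM, hN, one_mul]
  have hL_iota3' {K : Matrix (Fin 2) (Fin 2) ℝ} (hK : K.det = 1) {Z} (hZ : Z ∈ SiegelUHP 2) :
      L (iota3' K) Z = 0 :=
    hL.eq_zero_of_Jfac_eq_one (iota3'_mem_symplecticGroup (hK ▸ isUnit_one))
      (fun W _ => Jfac_iota3' hK W) hZ
  rw [wcoc, iota3'_mul, hL_iota3' hMN (iE_mem_siegelUHP 2),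
    hL_iota3' hM (spAct_iota3'_iE_mem_siegelUHP (hN ▸ isUnit_one)),
    hL_iota3' hN (iE_mem_siegelUHP 2)]
  simp

/-- `w(ι₃(M), ι₃(N)) = 0` for all `M, N ∈ SL(2,ℝ)`; consequently, for any
multiplier system `v` of weight `r` on a group containing the image of `ι₃`,
the map `M ↦ v(ι₃(M))` is a group homomorphism. -/
theorem w_iota3_vanishes
    (L : SpMat 2 → Matrix (Fin 2) (Fin 2) ℂ → ℝ) (hL : IsArgBranch 2 L) :
    (∀ M N : Matrix (Fin 2) (Fin 2) ℝ, M.det = 1 → N.det = 1 →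
      wcoc L (iota3' M) (iota3' N) = 0) ∧
    (∀ (Γ : Set (SpMat 2)) (r : ℝ) (v : SpMat 2 → ℂ),
      IsMultiplier 2 L Γ r v →
      (∀ K : Matrix (Fin 2) (Fin 2) ℝ, K.det = 1 → iota3' K ∈ Γ) →
      ∀ M N : Matrix (Fin 2) (Fin 2) ℝ, M.det = 1 → N.det = 1 →
        v (iota3' (M * N)) = v (iota3' M) * v (iota3' N)) := by
  refine ⟨fun M N hM hN => wcoc_iota3' hL hM hN, fun Γ r v hv hΓ M N hM hN => ?_⟩
  rw [← iota3'_mul]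
  exact hv.map_mul_of_wcoc_eq_zero (hΓ M hM) (hΓ N hN) (wcoc_iota3' hL hM hN)
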